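/- arXiv:2509.19043 — 2 statements merged into one kernel-verified Lean document; each statement's English description precedes it below -/
import Mathlib

section
/- Let d ≥ 2, let ζ : ℝ^{d−1} → ℝ be C¹, and let Φ(x₁, x̂) = (x₁ − ζ(x̂), x̂) be the associated shear with inverse Φ^{−1}(y₁, ŷ) = (y₁ + ζ(ŷ), ŷ). Let F ∈ C¹(ℝ^d; ℝ^d) and set G = F ∘ Φ^{−1}. Then for every y = (y₁, ŷ) ∈ ℝ^d the function y₁ ↦ G₁(y₁,ŷ) − Σ_{k=2}^d ∂_kζ(ŷ) G_k(y₁,ŷ) is differentiable in y₁ and (div F)(Φ^{−1}(y)) = ∂_{y₁}[ G₁(y) − Σ_{k=2}^d ∂_kζ(ŷ) G_k(y) ] + Σ_{k=2}^d ∂_{y_k} G_k(y). -/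
open Set Function

/-- **Transformation of the divergence under the shear change of variables.**
If `G = F ∘ Φ⁻¹` with `Φ⁻¹(y₁, ŷ) = (y₁ + ζ(ŷ), ŷ)`, then the map
`y₁ ↦ G₁ − Σ_k ∂_kζ(ŷ) G_k` is differentiable in `y₁` and
`(div F)(Φ⁻¹(y)) = ∂_{y₁}[G₁ − Σ_k ∂_kζ(ŷ) G_k] + Σ_k ∂_{y_k} G_k`. -/
theorem divergence_under_shear
    (d : ℕ) (hd : 2 ≤ d)
    (ζ : (Fin (d - 1) → ℝ) → ℝ) (hζ : ContDiff ℝ 1 ζ)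
    (F : ℝ × (Fin (d - 1) → ℝ) → ℝ × (Fin (d - 1) → ℝ)) (hF : ContDiff ℝ 1 F)
    (G : ℝ × (Fin (d - 1) → ℝ) → ℝ × (Fin (d - 1) → ℝ))
    (hG : ∀ q : ℝ × (Fin (d - 1) → ℝ), G q = F (q.1 + ζ q.2, q.2))
    (y : ℝ × (Fin (d - 1) → ℝ)) :
    DifferentiableAt ℝ
      (fun s : ℝ => (G (s, y.2)).1 - ∑ k, fderiv ℝ ζ y.2 (Pi.single k 1) * (G (s, y.2)).2 k) y.1 ∧
    fderiv ℝ (fun p => (F p).1) (y.1 + ζ y.2, y.2) (1, 0)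
        + ∑ k, fderiv ℝ (fun p => (F p).2 k) (y.1 + ζ y.2, y.2) ((0 : ℝ), Pi.single k (1 : ℝ))
      = deriv
          (fun s : ℝ => (G (s, y.2)).1 - ∑ k, fderiv ℝ ζ y.2 (Pi.single k 1) * (G (s, y.2)).2 k) y.1
        + ∑ k, fderiv ℝ (fun q => (G q).2 k) y ((0 : ℝ), Pi.single k (1 : ℝ)) := by
  classical
  have hFd : Differentiable ℝ F := hF.differentiable one_ne_zero
  have hζd : Differentiable ℝ ζ := hζ.differentiable one_ne_zero
  set p : ℝ × (Fin (d-1) → ℝ) := (y.1 + ζ y.2, y.2) with hp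
  have hFp : HasFDerivAt F (fderiv ℝ F p) p := (hFd p).hasFDerivAt
  set L := fderiv ℝ F p with hL
  set c : Fin (d-1) → ℝ := fun k => fderiv ℝ ζ y.2 (Pi.single k 1) with hc
  -- derivative of the curve s ↦ (s + ζ ŷ, ŷ)
  have hcurve : HasDerivAt (fun s : ℝ => ((s + ζ y.2 : ℝ), y.2)) ((1:ℝ), (0:(Fin (d-1) → ℝ))) y.1 :=
    ((hasDerivAt_id y.1).add_const _).prodMk (hasDerivAt_const _ _)
  have hcomp : HasDerivAt (fun s : ℝ => F (s + ζ y.2, y.2)) (L (1, 0)) y.1 :=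
    hFp.comp_hasDerivAt y.1 hcurve
  have e1 : HasDerivAt (fun s : ℝ => (F (s + ζ y.2, y.2)).1) ((L (1, 0)).1) y.1 := hcomp.fst
  have ek : ∀ k, HasDerivAt (fun s : ℝ => (F (s + ζ y.2, y.2)).2 k) ((L (1, 0)).2 k) y.1 := by
    intro k
    exact (ContinuousLinearMap.proj (R := ℝ) (φ := fun _ : Fin (d-1) => ℝ) k).hasFDerivAt.comp_hasDerivAt y.1 hcomp.snd
  -- the 1D function and its derivative
  have hfun : (fun s : ℝ => (G (s, y.2)).1 - ∑ k, fderiv ℝ ζ y.2 (Pi.single k 1) * (G (s, y.2)).2 k)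
      = fun s : ℝ => (F (s + ζ y.2, y.2)).1 - ∑ k, c k * (F (s + ζ y.2, y.2)).2 k := by
    funext s; simp [hG, hc]
  have hD : HasDerivAt
      (fun s : ℝ => (G (s, y.2)).1 - ∑ k, fderiv ℝ ζ y.2 (Pi.single k 1) * (G (s, y.2)).2 k)
      ((L (1, 0)).1 - ∑ k, c k * (L (1, 0)).2 k) y.1 := by
    rw [hfun]
    exact e1.sub (HasDerivAt.fun_sum fun k _ => (ek k).const_mul (c k))
  refine ⟨hD.differentiableAt, ?_⟩
  rw [hD.deriv]
  -- fderiv of components of F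
  have hF1 : fderiv ℝ (fun p => (F p).1) p (1, 0) = (L (1, 0)).1 := by
    have := ((ContinuousLinearMap.fst ℝ ℝ (Fin (d-1) → ℝ)).hasFDerivAt.comp p hFp).fderiv
    rw [show (fun p => (F p).1) = (ContinuousLinearMap.fst ℝ ℝ (Fin (d-1) → ℝ)) ∘ F from rfl, this]; rfl
  have hFk : ∀ k, fderiv ℝ (fun p => (F p).2 k) p ((0:ℝ), Pi.single k (1:ℝ))
      = (L ((0:ℝ), Pi.single k (1:ℝ))).2 k := by
    intro k
    have := (((ContinuousLinearMap.proj (R := ℝ) (φ := fun _ : Fin (d-1) => ℝ) k).comp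
        (ContinuousLinearMap.snd ℝ ℝ (Fin (d-1) → ℝ))).hasFDerivAt.comp p hFp).fderiv
    rw [show (fun p => (F p).2 k) = ((ContinuousLinearMap.proj (R := ℝ) (φ := fun _ : Fin (d-1) => ℝ) k).comp
        (ContinuousLinearMap.snd ℝ ℝ (Fin (d-1) → ℝ))) ∘ F from rfl, this]; rfl
  -- fderiv of Ψ and of G
  set M : (ℝ × (Fin (d-1) → ℝ)) →L[ℝ] (ℝ × (Fin (d-1) → ℝ)) :=
    (ContinuousLinearMap.fst ℝ ℝ (Fin (d-1) → ℝ) + (fderiv ℝ ζ y.2).comp (ContinuousLinearMap.snd ℝ ℝ (Fin (d-1) → ℝ))).prod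
      (ContinuousLinearMap.snd ℝ ℝ (Fin (d-1) → ℝ)) with hM
  have hΨ : HasFDerivAt (fun q : ℝ × (Fin (d-1) → ℝ) => ((q.1 + ζ q.2 : ℝ), q.2)) M y := by
    exact (hasFDerivAt_fst.add ((hζd y.2).hasFDerivAt.comp y hasFDerivAt_snd)).prodMk hasFDerivAt_snd
  have hGk : ∀ k, fderiv ℝ (fun q => (G q).2 k) y ((0:ℝ), Pi.single k (1:ℝ))
      = (L (M ((0:ℝ), Pi.single k (1:ℝ)))).2 k := by
    intro k
    have hcompF : HasFDerivAt (fun q : ℝ × (Fin (d-1) → ℝ) => (G q).2 k)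
        (((ContinuousLinearMap.proj (R := ℝ) (φ := fun _ : Fin (d-1) => ℝ) k).comp
          (ContinuousLinearMap.snd ℝ ℝ (Fin (d-1) → ℝ))).comp (L.comp M)) y := by
      have h2 : HasFDerivAt (fun q : ℝ × (Fin (d-1) → ℝ) => F (q.1 + ζ q.2, q.2)) (L.comp M) y :=
        hFp.comp y hΨ
      have h3 := (((ContinuousLinearMap.proj (R := ℝ) (φ := fun _ : Fin (d-1) => ℝ) k).comp
          (ContinuousLinearMap.snd ℝ ℝ (Fin (d-1) → ℝ))).hasFDerivAt.comp y h2)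
      exact h3.congr_of_eventuallyEq (Filter.Eventually.of_forall fun q => by simp [hG])
    rw [hcompF.fderiv]; rfl
  have hMk : ∀ k, M ((0:ℝ), Pi.single k (1:ℝ)) = ((c k : ℝ), Pi.single k (1:ℝ)) := by
    intro k; simp [hM, hc]
  have hLlin : ∀ k, (L ((c k : ℝ), Pi.single k (1:ℝ))).2 k
      = c k * (L (1, 0)).2 k + (L ((0:ℝ), Pi.single k (1:ℝ))).2 k := by
    intro k
    have : ((c k : ℝ), Pi.single k (1:ℝ)) = c k • ((1:ℝ), (0:(Fin (d-1) → ℝ))) + ((0:ℝ), Pi.single k (1:ℝ)) := by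
      simp [Prod.ext_iff]
    rw [this, map_add, map_smul]
    simp
  rw [hF1]
  simp only [hFk, hGk, hMk, hLlin]
  rw [Finset.sum_add_distrib]
  ring
end

section
/- Let ω ∈ C^∞(ℝ) be nondecreasing with ω(z) = 0 for z < −1 and ω(z) = 1 for z > 1. Let N, ε, R > 0 and a ∈ ℝ^d, and define η : (0,∞) × ℝ^d → ℝ by η(t,x) = 1 − ω( (‖x−a‖ + Nt − R + ε)/ε ), with ‖·‖ the Euclidean norm. Then: (i) 0 ≤ η ≤ 1 and η(t,x) = 0 whenever ‖x−a‖ > R − Nt; (ii) at every point (t,x) with x ≠ a, η is differentiable and ∂_t η(t,x) = −N ‖∇_x η(t,x)‖; (iii) for two such functions η_i, η_j (with centers a_i ≠ a_j and radii R_i, R_j, same N, ε, ω), the product χ = η_i η_j satisfies, at every (t,x) with x ∉ {a_i, a_j} and for every v ∈ ℝ^d with ‖v‖ ≤ N, the transport inequality ∂_t χ(t,x) + v · ∇_x χ(t,x) ≤ 0. -/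
open Set MeasureTheory Function Metric
open scoped RealInnerProductSpace Topology

section Helpers

variable {E : Type*} [NormedAddCommGroup E] [InnerProductSpace ℝ E] [CompleteSpace E]

lemma monotone_deriv_nonneg' {ω : ℝ → ℝ} (hm : Monotone ω) {D z : ℝ}
    (h : HasDerivAt ω D z) : 0 ≤ D := by
  have hs : Filter.Tendsto (slope ω z) (𝓝[>] z) (𝓝 D) :=
    (hasDerivAt_iff_tendsto_slope.1 h).mono_left
      (nhdsWithin_mono z (by intro y hy; exact ne_of_gt hy))
  refine ge_of_tendsto hs ?_
  filter_upwards [self_mem_nhdsWithin] with y hy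
  have hy' : (0:ℝ) < y - z := sub_pos.2 hy
  rw [slope_def_field]; exact div_nonneg (sub_nonneg.2 (hm (le_of_lt hy))) hy'.le

lemma hasGradientAt_norm_sub' (c x : E) (hx : x ≠ c) :
    HasGradientAt (fun y => ‖y - c‖) (‖x - c‖⁻¹ • (x - c)) x := by
  have hxc : x - c ≠ 0 := sub_ne_zero.2 hx
  have hsq : HasFDerivAt (fun y : E => ‖y - c‖ ^ 2)
      (2 • (innerSL ℝ (x - c)).comp (ContinuousLinearMap.id ℝ E)) x := by
    have : HasFDerivAt (fun y : E => y - c) (ContinuousLinearMap.id ℝ E) x :=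
      (hasFDerivAt_id x).sub_const c
    exact this.norm_sq
  have hpos : (0:ℝ) < ‖x - c‖ ^ 2 := by have := norm_pos_iff.2 hxc; positivity
  have hsqrt : HasDerivAt Real.sqrt (1 / (2 * Real.sqrt (‖x - c‖ ^ 2))) (‖x - c‖ ^ 2) :=
    Real.hasDerivAt_sqrt hpos.ne'
  have hcomp := hsqrt.comp_hasFDerivAt x hsq
  rw [show Real.sqrt ∘ (fun y : E => ‖y - c‖ ^ 2) = fun y : E => ‖y - c‖ from
    funext fun y => Real.sqrt_sq (norm_nonneg _)] at hcomp
  rw [hasGradientAt_iff_hasFDerivAt]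
  refine hcomp.congr_fderiv ?_
  ext v
  simp only [InnerProductSpace.toDual_apply_apply, ContinuousLinearMap.smul_apply,
    ContinuousLinearMap.coe_smul', Pi.smul_apply, ContinuousLinearMap.coe_comp',
    Function.comp_apply, ContinuousLinearMap.coe_id', id_eq, innerSL_apply_apply,
    Real.sqrt_sq (norm_nonneg (x - c))]
  rw [real_inner_smul_left]
  simp [ContinuousLinearMap.smul_apply]
  ring

lemma cutoff_derivs' {ω : ℝ → ℝ} (hωsmooth : ContDiff ℝ (⊤ : ℕ∞) ω) {N ε : ℝ} (hε : 0 < ε)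
    (c : E) (ρ t : ℝ) (x : E) (hx : x ≠ c) :
    HasDerivAt (fun s => 1 - ω ((‖x - c‖ + N * s - ρ + ε) / ε))
      (-(deriv ω ((‖x - c‖ + N * t - ρ + ε) / ε) * (N / ε))) t ∧
    HasGradientAt (fun y => 1 - ω ((‖y - c‖ + N * t - ρ + ε) / ε))
      (-(deriv ω ((‖x - c‖ + N * t - ρ + ε) / ε) / ε) • (‖x - c‖⁻¹ • (x - c))) x ∧
    DifferentiableAt ℝ (fun q : ℝ × E => 1 - ω ((‖q.2 - c‖ + N * q.1 - ρ + ε) / ε)) (t, x) := by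
  set g := (‖x - c‖ + N * t - ρ + ε) / ε with hg
  set D := deriv ω g with hD
  have hω : HasDerivAt ω D g := ((hωsmooth.differentiable (by simp)) g).hasDerivAt
  refine ⟨?_, ?_, ?_⟩
  · have h1 : HasDerivAt (fun s : ℝ => N * s) N t := by
      simpa using (hasDerivAt_id t).const_mul N
    have hin : HasDerivAt (fun s : ℝ => (‖x - c‖ + N * s - ρ + ε) / ε) (N / ε) t :=
      (((h1.const_add ‖x - c‖).sub_const ρ).add_const ε).div_const ε
    exact (hω.comp t hin).const_sub 1
  · have hnorm := (hasGradientAt_norm_sub' c x hx).hasFDerivAt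
    have haff := ((((hnorm.add_const (N * t)).sub_const ρ).add_const ε).mul_const ε⁻¹)
    have hω' : HasDerivAt ω D ((‖x - c‖ + N * t - ρ + ε) * ε⁻¹) := by
      rwa [← div_eq_mul_inv]
    have hcomp := (hω'.comp_hasFDerivAt x haff).const_sub 1
    rw [hasGradientAt_iff_hasFDerivAt]
    simp only [div_eq_mul_inv]
    refine hcomp.congr_fderiv ?_
    ext v
    simp only [_root_.map_smul, map_neg, ContinuousLinearMap.neg_apply, ContinuousLinearMap.smul_apply,
      InnerProductSpace.toDual_apply_apply, smul_eq_mul, real_inner_smul_left]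
    ring
  · have hsub : DifferentiableAt ℝ (fun q : ℝ × E => q.2 - c) (t, x) :=
      differentiableAt_snd.sub_const c
    have hn : DifferentiableAt ℝ (fun q : ℝ × E => ‖q.2 - c‖) (t, x) :=
      ((contDiffAt_norm ℝ (sub_ne_zero.2 hx) (n := 1)).differentiableAt one_ne_zero).comp (t, x) hsub
    have hin : DifferentiableAt ℝ
        (fun q : ℝ × E => (‖q.2 - c‖ + N * q.1 - ρ + ε) * ε⁻¹) (t, x) :=
      (((hn.add (differentiableAt_fst.const_mul N)).sub_const ρ).add_const ε).mul_const ε⁻¹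
    simp only [div_eq_mul_inv]
    exact (((hωsmooth.differentiable (by simp)) _).comp (t, x) hin).const_sub 1

end Helpers

/-- **Properties of the cone cutoff functions.**
For the smooth cutoff `η(t,x) = 1 − ω((‖x−a‖ + Nt − R + ε)/ε)` adapted to the
characteristic cone of speed `N`: (i) `0 ≤ η ≤ 1` and `η` vanishes outside the cone;
(ii) away from the center, `η` is differentiable and `∂_t η = −N‖∇_x η‖`;
(iii) the product of two such cutoffs satisfies the transport inequality
`∂_t χ + v·∇_x χ ≤ 0` for every velocity `v` with `‖v‖ ≤ N`. -/
theorem cone_cutoff_properties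
    (d : ℕ) (hd : 1 ≤ d)
    (ω : ℝ → ℝ) (hωsmooth : ContDiff ℝ (⊤ : ℕ∞) ω) (hωmono : Monotone ω)
    (hω0 : ∀ z : ℝ, z < -1 → ω z = 0) (hω1 : ∀ z : ℝ, 1 < z → ω z = 1)
    (N ε R : ℝ) (hN : 0 < N) (hε : 0 < ε) (hR : 0 < R)
    (a : EuclideanSpace ℝ (Fin d))
    (eta : EuclideanSpace ℝ (Fin d) → ℝ → ℝ → EuclideanSpace ℝ (Fin d) → ℝ)
    (heta : ∀ (c : EuclideanSpace ℝ (Fin d)) (ρ : ℝ) (t : ℝ) (x : EuclideanSpace ℝ (Fin d)),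
      eta c ρ t x = 1 - ω ((‖x - c‖ + N * t - ρ + ε) / ε)) :
    (∀ (t : ℝ) (x : EuclideanSpace ℝ (Fin d)), 0 < t →
      0 ≤ eta a R t x ∧ eta a R t x ≤ 1 ∧ (R - N * t < ‖x - a‖ → eta a R t x = 0)) ∧
    (∀ (t : ℝ) (x : EuclideanSpace ℝ (Fin d)), 0 < t → x ≠ a →
      DifferentiableAt ℝ (fun q : ℝ × EuclideanSpace ℝ (Fin d) => eta a R q.1 q.2) (t, x) ∧
      deriv (fun s => eta a R s x) t = -N * ‖gradient (fun y => eta a R t y) x‖) ∧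
    (∀ (ai aj : EuclideanSpace ℝ (Fin d)) (Ri Rj : ℝ), 0 < Ri → 0 < Rj → ai ≠ aj →
      ∀ (t : ℝ) (x : EuclideanSpace ℝ (Fin d)), 0 < t → x ≠ ai → x ≠ aj →
      ∀ v : EuclideanSpace ℝ (Fin d), ‖v‖ ≤ N →
        deriv (fun s => eta ai Ri s x * eta aj Rj s x) t
          + ⟪v, gradient (fun y => eta ai Ri t y * eta aj Rj t y) x⟫ ≤ 0) := by
  have hω01 : ∀ z : ℝ, 0 ≤ ω z ∧ ω z ≤ 1 := by
    intro z
    constructor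
    · have h0 : ω (min z (-2)) = 0 := hω0 _ (lt_of_le_of_lt (min_le_right _ _) (by norm_num))
      calc (0:ℝ) = ω (min z (-2)) := h0.symm
        _ ≤ ω z := hωmono (min_le_left _ _)
    · have h1 : ω (max z 2) = 1 := hω1 _ (lt_of_lt_of_le one_lt_two (le_max_right _ _))
      calc ω z ≤ ω (max z 2) := hωmono (le_max_left _ _)
        _ = 1 := h1
  have hetapos : ∀ (c : EuclideanSpace ℝ (Fin d)) (ρ t : ℝ) (x : EuclideanSpace ℝ (Fin d)),
      0 ≤ eta c ρ t x := by
    intro c ρ t x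
    rw [heta]
    linarith [(hω01 ((‖x - c‖ + N * t - ρ + ε) / ε)).2]
  refine ⟨?_, ?_, ?_⟩
  · intro t x ht
    refine ⟨hetapos a R t x, ?_, ?_⟩
    · rw [heta]
      linarith [(hω01 ((‖x - a‖ + N * t - R + ε) / ε)).1]
    · intro hout
      rw [heta, hω1 _ ((one_lt_div hε).2 (by linarith)), sub_self]
  · intro t x ht hx
    obtain ⟨hA, hB, hC⟩ := cutoff_derivs' hωsmooth hε a R t x hx
    set D := deriv ω ((‖x - a‖ + N * t - R + ε) / ε) with hD
    have hDnn : 0 ≤ D :=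
      monotone_deriv_nonneg' hωmono (((hωsmooth.differentiable (by simp)) _).hasDerivAt)
    constructor
    · simpa only [heta] using hC
    · have h1 : deriv (fun s => eta a R s x) t = -(D * (N / ε)) := by
        simp only [heta]; exact hA.deriv
      have h2 : gradient (fun y => eta a R t y) x = -(D / ε) • (‖x - a‖⁻¹ • (x - a)) := by
        simp only [heta]; exact hB.gradient
      have hu : ‖(‖x - a‖⁻¹ • (x - a))‖ = 1 := by
        rw [norm_smul, norm_inv, norm_norm,
          inv_mul_cancel₀ (norm_ne_zero_iff.2 (sub_ne_zero.2 hx))]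
      rw [h1, h2, norm_smul, hu, mul_one, Real.norm_eq_abs, abs_neg,
        abs_of_nonneg (div_nonneg hDnn hε.le)]
      ring
  · intro ai aj Ri Rj hRi hRj hij t x ht hxi hxj v hv
    obtain ⟨hAi, hBi, -⟩ := cutoff_derivs' hωsmooth hε ai Ri t x hxi
    obtain ⟨hAj, hBj, -⟩ := cutoff_derivs' hωsmooth hε aj Rj t x hxj
    set Di := deriv ω ((‖x - ai‖ + N * t - Ri + ε) / ε) with hDi
    set Dj := deriv ω ((‖x - aj‖ + N * t - Rj + ε) / ε) with hDj
    have hDin : 0 ≤ Di :=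
      monotone_deriv_nonneg' hωmono (((hωsmooth.differentiable (by simp)) _).hasDerivAt)
    have hDjn : 0 ≤ Dj :=
      monotone_deriv_nonneg' hωmono (((hωsmooth.differentiable (by simp)) _).hasDerivAt)
    set Pi' := (1 : ℝ) - ω ((‖x - ai‖ + N * t - Ri + ε) / ε) with hPi
    set Pj' := (1 : ℝ) - ω ((‖x - aj‖ + N * t - Rj + ε) / ε) with hPj
    have hPin : 0 ≤ Pi' := by
      have := hetapos ai Ri t x; rwa [heta] at this
    have hPjn : 0 ≤ Pj' := by
      have := hetapos aj Rj t x; rwa [heta] at this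
    set ui := (‖x - ai‖⁻¹ • (x - ai)) with hui
    set uj := (‖x - aj‖⁻¹ • (x - aj)) with huj
    set Gi := (-(Di / ε) • ui) with hGi
    set Gj := (-(Dj / ε) • uj) with hGj
    -- time derivative of the product
    have h1 : deriv (fun s => eta ai Ri s x * eta aj Rj s x) t
        = -(Di * (N / ε)) * Pj' + Pi' * -(Dj * (N / ε)) := by
      simp only [heta]
      exact (hAi.mul hAj).deriv
    -- gradient of the product
    have hGmul : HasGradientAt
        (fun y => (1 - ω ((‖y - ai‖ + N * t - Ri + ε) / ε)) *
          (1 - ω ((‖y - aj‖ + N * t - Rj + ε) / ε))) (Pi' • Gj + Pj' • Gi) x := by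
      have hmul := hBi.hasFDerivAt.mul hBj.hasFDerivAt
      rw [hasGradientAt_iff_hasFDerivAt]
      refine hmul.congr_fderiv ?_
      simp [map_add, _root_.map_smul, hPi, hPj]
    have h2 : gradient (fun y => eta ai Ri t y * eta aj Rj t y) x = Pi' • Gj + Pj' • Gi := by
      simp only [heta]
      exact hGmul.gradient
    rw [h1, h2]
    have hnui : ‖ui‖ = 1 := by
      rw [hui, norm_smul, norm_inv, norm_norm,
        inv_mul_cancel₀ (norm_ne_zero_iff.2 (sub_ne_zero.2 hxi))]
    have hnuj : ‖uj‖ = 1 := by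
      rw [huj, norm_smul, norm_inv, norm_norm,
        inv_mul_cancel₀ (norm_ne_zero_iff.2 (sub_ne_zero.2 hxj))]
    have hivi : |⟪v, ui⟫| ≤ N := by
      calc |⟪v, ui⟫| ≤ ‖v‖ * ‖ui‖ := abs_real_inner_le_norm v ui
        _ = ‖v‖ := by rw [hnui, mul_one]
        _ ≤ N := hv
    have hivj : |⟪v, uj⟫| ≤ N := by
      calc |⟪v, uj⟫| ≤ ‖v‖ * ‖uj‖ := abs_real_inner_le_norm v uj
        _ = ‖v‖ := by rw [hnuj, mul_one]
        _ ≤ N := hv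
    have hinner : ⟪v, Pi' • Gj + Pj' • Gi⟫
        = Pi' * (-(Dj / ε) * ⟪v, uj⟫) + Pj' * (-(Di / ε) * ⟪v, ui⟫) := by
      simp only [hGi, hGj, inner_add_right, real_inner_smul_right]
    rw [hinner]
    have hi1 : -N ≤ ⟪v, ui⟫ := by have := abs_le.1 hivi; linarith [this.1]
    have hj1 : -N ≤ ⟪v, uj⟫ := by have := abs_le.1 hivj; linarith [this.1]
    have keyi : 0 ≤ Pj' * (Di / ε) * (N + ⟪v, ui⟫) :=
      mul_nonneg (mul_nonneg hPjn (div_nonneg hDin hε.le)) (by linarith)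
    have keyj : 0 ≤ Pi' * (Dj / ε) * (N + ⟪v, uj⟫) :=
      mul_nonneg (mul_nonneg hPin (div_nonneg hDjn hε.le)) (by linarith)
    have : -(Di * (N / ε)) * Pj' + Pi' * -(Dj * (N / ε))
        + (Pi' * (-(Dj / ε) * ⟪v, uj⟫) + Pj' * (-(Di / ε) * ⟪v, ui⟫))
        = -(Pj' * (Di / ε) * (N + ⟪v, ui⟫)) - Pi' * (Dj / ε) * (N + ⟪v, uj⟫) := by
      field_simp
      ring
    rw [this]
    linarith
end
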